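/- For every integer n ≥ 1, every p ∈ I_n, and every integer j ≥ 0: 0 < h_{p,j} < w_{p,j} and 0 < w_{p,j+1} < h_{p,j}. In particular all widths w_{p,j} and all heights h_{p,j} are positive (the partitioned rectangle is well defined). -/

import Mathlib

open Matrix

noncomputable section

/-- `M1 = [[1,1,0],[0,1,0],[0,0,1]]`. -/
def M1 : Matrix (Fin 3) (Fin 3) ℝ := !![1, 1, 0; 0, 1, 0; 0, 0, 1]

/-- `M2 = [[1,0,0],[1,1,1],[0,0,1]]`. -/
def M2 : Matrix (Fin 3) (Fin 3) ℝ := !![1, 0, 0; 1, 1, 1; 0, 0, 1]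

/-- `M3 = [[1,0,0],[0,1,0],[0,1,1]]`. -/
def M3 : Matrix (Fin 3) (Fin 3) ℝ := !![1, 0, 0; 0, 1, 0; 0, 1, 1]

/- A tuple `p = (p_n, p_n', q_n, …, p_1, p_1', q_1) ∈ ℕ₀^{3n}` is encoded by three
functions `P P' Q : Fin n → ℕ`, where the index `i : Fin n` corresponds to the
subscript `i + 1` (so `P ⟨0,_⟩ = p_1`, …, `P ⟨n-1,_⟩ = p_n`). -/

/-- The transition matrix `M_p = M1^{p_n} M3^{p_n'} M2^{q_n} ⋯ M1^{p_1} M3^{p_1'} M2^{q_1}`. -/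
def Mp (n : ℕ) (P P' Q : Fin n → ℕ) : Matrix (Fin 3) (Fin 3) ℝ :=
  ((List.finRange n).map fun i => M1 ^ P i.rev * M3 ^ P' i.rev * M2 ^ Q i.rev).prod

/-- Membership of the tuple `p` in `I_n`. -/
def memI (n : ℕ) (P P' Q : Fin n → ℕ) : Prop :=
  (∀ i, 0 < Q i) ∧ (∀ i, 0 < P i + P' i) ∧ (∃ j, 0 < P j) ∧ (∃ k, 0 < P' k)

/-- Finite continued fraction: `cf [a₁, …, a_m] x = 1/(a₁ + 1/(a₂ + ⋯ + 1/(a_m + x)))`. -/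
def cf (l : List ℕ) (x : ℝ) : ℝ := l.foldr (fun a y => 1 / (a + y)) x

/-- The (0-indexed) block index `k(j+1) - 1 = n - 1 - (j mod n)` used at step `j + 1`. -/
def blk (n : ℕ) (hn : 0 < n) (j : ℕ) : Fin n :=
  ⟨n - 1 - j % n, lt_of_le_of_lt (Nat.sub_le _ _) (Nat.sub_lt hn one_pos)⟩

/-- The sequence `(a₁, …, a_{2n}) = (p_n + p_n', q_n, …, p_1 + p_1', q_1)` as a list. -/
def aList (n : ℕ) (hn : 0 < n) (P P' Q : Fin n → ℕ) : List ℕ :=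
  (List.range n).flatMap fun i => [P (blk n hn i) + P' (blk n hn i), Q (blk n hn i)]

/-- `isH0 n hn P P' Q h0` says that `h0` is the number `h_{p,0}`: a real number in `(0,1)`
that is a fixed point of `x ↦ 1/(a₁ + 1/(a₂ + ⋯ + 1/(a_{2n} + x)))` (there is exactly one). -/
def isH0 (n : ℕ) (hn : 0 < n) (P P' Q : Fin n → ℕ) (h0 : ℝ) : Prop :=
  h0 ∈ Set.Ioo (0 : ℝ) 1 ∧ cf (aList n hn P P' Q) h0 = h0

/-- The pair `(w_{p,j}, h_{p,j})`, with `w_{p,0} = 1`, `h_{p,0} = h0`, and for `j ≥ 1`: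
`w_{p,j} = w_{p,j-1} − (p_{k(j)} + p'_{k(j)}) h_{p,j-1}`, `h_{p,j} = h_{p,j-1} − q_{k(j)} w_{p,j}`. -/
def wh (n : ℕ) (hn : 0 < n) (P P' Q : Fin n → ℕ) (h0 : ℝ) : ℕ → ℝ × ℝ
  | 0 => (1, h0)
  | j + 1 =>
    let prev := wh n hn P P' Q h0 j
    let b := blk n hn j
    let w := prev.1 - ((P b : ℝ) + (P' b : ℝ)) * prev.2
    (w, prev.2 - (Q b : ℝ) * w)

/-- The width `w_{p,j}`. -/
def wseq (n : ℕ) (hn : 0 < n) (P P' Q : Fin n → ℕ) (h0 : ℝ) (j : ℕ) : ℝ :=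
  (wh n hn P P' Q h0 j).1

/-- The height `h_{p,j}`. -/
def hseq (n : ℕ) (hn : 0 < n) (P P' Q : Fin n → ℕ) (h0 : ℝ) (j : ℕ) : ℝ :=
  (wh n hn P P' Q h0 j).2

/-- The split ratio `s_p = Σ_{i=0}^∞ p_{k(i+1)} h_{p,i}`. -/
def splitRatio (n : ℕ) (hn : 0 < n) (P P' Q : Fin n → ℕ) (h0 : ℝ) : ℝ :=
  ∑' i : ℕ, (P (blk n hn i) : ℝ) * hseq n hn P P' Q h0 i

/-- The reindexing realizing the shift `T`: the tuple `T(p)` is given by the functions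
`P ∘ shiftIdx n hn`, `P' ∘ shiftIdx n hn`, `Q ∘ shiftIdx n hn`. -/
def shiftIdx (n : ℕ) (hn : 0 < n) (i : Fin n) : Fin n :=
  ⟨(i.val + (n - 1)) % n, Nat.mod_lt _ hn⟩


/-! The ratio `h_{p,j} / w_{p,j}` is the value at `h_{p,0}` of the continued fraction whose
partial quotients are those of `p` read cyclically from block `j`; the fixed-point property of
`h_{p,0}` is exactly what makes this survive the wrap-around. Such a value is positive, and one
step of the recursion peels off the two partial quotients `p_{k(j+1)} + p'_{k(j+1)} ≥ 1` and
`q_{k(j+1)} ≥ 1`, each of which forces one of the two strict inequalities. -/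

lemma cf_cons (a : ℕ) (l : List ℕ) (x : ℝ) : cf (a :: l) x = 1 / (a + cf l x) := rfl

lemma cf_pos (l : List ℕ) {x : ℝ} (hx : 0 < x) : 0 < cf l x := by
  induction l with
  | nil => exact hx
  | cons a l ih => rw [cf_cons]; positivity

lemma bounds_of_eq_cf_mul {A B x w h w' : ℝ} (hA : 1 ≤ A) (hB : 1 ≤ B) (hx : 0 < x)
    (hw : 0 < w) (hh : h = 1 / (A + 1 / (B + x)) * w) (hw' : w' = w - A * h) :
    0 < h ∧ h < w ∧ 0 < w' ∧ w' < h ∧ h - B * w' = x * w' := by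
  set v := 1 / (B + x) with hv
  set u := 1 / (A + v) with hu
  have hv_pos : 0 < v := one_div_pos.mpr (by linarith)
  have hv_lt : v < 1 := by rw [hv, div_lt_one (by linarith)]; linarith
  have hu_pos : 0 < u := one_div_pos.mpr (by linarith)
  have hu_lt : u < 1 := by rw [hu, div_lt_one (by linarith)]; linarith
  have hw'_eq : w' = u * v * w := by
    rw [hw', hh, hu]; field_simp; ring
  have hBv : B * v = 1 - x * v := by rw [hv]; field_simp; ring
  refine ⟨by rw [hh]; positivity, by rw [hh]; nlinarith, by rw [hw'_eq]; positivity, ?_, ?_⟩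
  · rw [hw'_eq, hh]; nlinarith [mul_pos hu_pos hw]
  · rw [hw'_eq, hh]; linear_combination (-(u * w)) * hBv

section Recursion

variable {n : ℕ} (hn : 0 < n) (P P' Q : Fin n → ℕ)

/-- The tail of `aList` after its first `2 * k` entries. -/
def blockTail (k : ℕ) : List ℕ :=
  (List.range' k (n - k)).flatMap fun i => [P (blk n hn i) + P' (blk n hn i), Q (blk n hn i)]

lemma blockTail_zero : blockTail hn P P' Q 0 = aList n hn P P' Q := by
  simp [blockTail, aList, List.range_eq_range']

lemma blockTail_self : blockTail hn P P' Q n = [] := by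
  simp [blockTail]

lemma blockTail_of_lt {k : ℕ} (hk : k < n) :
    blockTail hn P P' Q k =
      (P (blk n hn k) + P' (blk n hn k)) :: Q (blk n hn k) :: blockTail hn P P' Q (k + 1) := by
  rw [blockTail, show n - k = n - (k + 1) + 1 by omega, List.range'_succ]
  rfl

lemma blk_mod (j : ℕ) : blk n hn (j % n) = blk n hn j := by
  simp [blk, Nat.mod_mod_of_dvd]

def tailRatio (h0 : ℝ) (j : ℕ) : ℝ := cf (blockTail hn P P' Q (j % n)) h0

lemma tailRatio_pos {h0 : ℝ} (hh0 : 0 < h0) (j : ℕ) : 0 < tailRatio hn P P' Q h0 j :=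
  cf_pos _ hh0

variable {P P' Q} {h0 : ℝ}

lemma tailRatio_zero (hfix : cf (aList n hn P P' Q) h0 = h0) : tailRatio hn P P' Q h0 0 = h0 := by
  rw [tailRatio, Nat.zero_mod, blockTail_zero, hfix]

lemma tailRatio_eq (hfix : cf (aList n hn P P' Q) h0 = h0) (j : ℕ) :
    tailRatio hn P P' Q h0 j =
      1 / ((P (blk n hn j) + P' (blk n hn j) : ℝ) +
        1 / ((Q (blk n hn j) : ℝ) + tailRatio hn P P' Q h0 (j + 1))) := by
  have hj : j % n < n := Nat.mod_lt _ hn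
  have hnext : cf (blockTail hn P P' Q (j % n + 1)) h0 = tailRatio hn P P' Q h0 (j + 1) := by
    rw [tailRatio, ← Nat.mod_add_mod]
    rcases (show j % n + 1 ≤ n by omega).lt_or_eq with hlt | hlast
    · rw [Nat.mod_eq_of_lt hlt]
    · rw [hlast, Nat.mod_self, blockTail_self, blockTail_zero, hfix]; rfl
  rw [tailRatio, blockTail_of_lt hn P P' Q hj, cf_cons, cf_cons, hnext, blk_mod]
  push_cast
  rfl

lemma wseq_succ (j : ℕ) :
    wseq n hn P P' Q h0 (j + 1) =
      wseq n hn P P' Q h0 j - ((P (blk n hn j) : ℝ) + P' (blk n hn j)) * hseq n hn P P' Q h0 j :=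
  rfl

lemma hseq_succ (j : ℕ) :
    hseq n hn P P' Q h0 (j + 1) =
      hseq n hn P P' Q h0 j - (Q (blk n hn j) : ℝ) * wseq n hn P P' Q h0 (j + 1) :=
  rfl

end Recursion

section Invariant

variable {n : ℕ} {hn : 0 < n} {P P' Q : Fin n → ℕ} {h0 : ℝ}

lemma memI.one_le_add (hI : memI n P P' Q) (i : Fin n) : (1 : ℝ) ≤ P i + P' i := by
  exact_mod_cast hI.2.1 i

lemma memI.one_le_Q (hI : memI n P P' Q) (i : Fin n) : (1 : ℝ) ≤ Q i := by
  exact_mod_cast hI.1 i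

lemma bounds_of_hseq_eq_tailRatio_mul (hI : memI n P P' Q) (hh0 : isH0 n hn P P' Q h0) {j : ℕ}
    (hw : 0 < wseq n hn P P' Q h0 j)
    (hh : hseq n hn P P' Q h0 j = tailRatio hn P P' Q h0 j * wseq n hn P P' Q h0 j) :
    0 < hseq n hn P P' Q h0 j ∧
      hseq n hn P P' Q h0 j < wseq n hn P P' Q h0 j ∧
      0 < wseq n hn P P' Q h0 (j + 1) ∧
      wseq n hn P P' Q h0 (j + 1) < hseq n hn P P' Q h0 j ∧
      hseq n hn P P' Q h0 (j + 1) =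
        tailRatio hn P P' Q h0 (j + 1) * wseq n hn P P' Q h0 (j + 1) := by
  rw [tailRatio_eq hn hh0.2] at hh
  rw [hseq_succ]
  exact bounds_of_eq_cf_mul (hI.one_le_add _) (hI.one_le_Q _)
    (tailRatio_pos hn P P' Q hh0.1.1 _) hw hh (wseq_succ hn j)

lemma wseq_pos_and_hseq_eq_tailRatio_mul (hI : memI n P P' Q) (hh0 : isH0 n hn P P' Q h0)
    (j : ℕ) :
    0 < wseq n hn P P' Q h0 j ∧
      hseq n hn P P' Q h0 j = tailRatio hn P P' Q h0 j * wseq n hn P P' Q h0 j := by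
  induction j with
  | zero => exact ⟨one_pos, by rw [tailRatio_zero hn hh0.2]; exact (mul_one h0).symm⟩
  | succ j ih =>
    obtain ⟨-, -, hw, -, hh⟩ := bounds_of_hseq_eq_tailRatio_mul hI hh0 ih.1 ih.2
    exact ⟨hw, hh⟩

end Invariant

/-- for `p ∈ I_n` and every `j ≥ 0`: `0 < h_{p,j} < w_{p,j}` and
`0 < w_{p,j+1} < h_{p,j}`. -/
theorem stmt3 (n : ℕ) (hn : 0 < n) (P P' Q : Fin n → ℕ) (hI : memI n P P' Q)
    (h0 : ℝ) (hh0 : isH0 n hn P P' Q h0) :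
    ∀ j : ℕ,
      0 < hseq n hn P P' Q h0 j ∧
      hseq n hn P P' Q h0 j < wseq n hn P P' Q h0 j ∧
      0 < wseq n hn P P' Q h0 (j + 1) ∧
      wseq n hn P P' Q h0 (j + 1) < hseq n hn P P' Q h0 j := by
  intro j
  obtain ⟨hw, hh⟩ := wseq_pos_and_hseq_eq_tailRatio_mul hI hh0 j
  obtain ⟨hpos, hlt, hw_succ, hlt_succ, -⟩ := bounds_of_hseq_eq_tailRatio_mul hI hh0 hw hh
  exact ⟨hpos, hlt, hw_succ, hlt_succ⟩
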